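/- arXiv:1402.4846 — 2 statements merged into one kernel-verified Lean document; each statement's English description precedes it below -/
import Mathlib

section
/- Let M ∈ ℤ^{P×R} be a matrix each of whose columns is a permutation of either (−1, −1, +1, 0, …, 0) or (−2, +1, 0, …, 0) (so each column has exactly one entry equal to +1). Suppose there exists e ∈ (0,∞)^P such that e^T M = 0. Then M has a nonzero row all of whose entries are nonnegative (hence equal to 0 or 1). -/
/-!
Conservation gives `e j₃ = e j₁ + e j₂` for every reaction, so with `e > 0` each species
consumed by a reaction is strictly lighter than the product of that reaction. Hence a species
of maximal weight among those occurring in some reaction is never consumed: its row is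
nonzero and nonnegative.
-/

open Finset

/-- The stoichiometric column `ε_c - ε_a - ε_b` of the reaction `A_a + A_b ⇌ A_c`. -/
def reactionVector {ι : Type*} [DecidableEq ι] (a b c : ι) : ι → ℤ := fun i =>
  (if i = c then 1 else 0) - (if i = a then 1 else 0) - (if i = b then 1 else 0)

section ReactionVector

variable {ι : Type*} [DecidableEq ι] {a b c : ι}

theorem reactionVector_product (hca : c ≠ a) (hcb : c ≠ b) : reactionVector a b c c = 1 := by
  simp [reactionVector, hca, hcb]

theorem eq_or_eq_of_reactionVector_neg {i : ι} (hi : reactionVector a b c i < 0) :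
    i = a ∨ i = b := by
  by_contra! h
  simp only [reactionVector, h.1, h.2, if_false, sub_zero] at hi
  split_ifs at hi <;> omega

theorem sum_mul_reactionVector [Fintype ι] {R : Type*} [CommRing R] (e : ι → R) :
    ∑ i, e i * (reactionVector a b c i : R) = e c - e a - e b := by
  simp only [reactionVector, Int.cast_sub, Int.cast_ite, Int.cast_one, Int.cast_zero, mul_sub,
    mul_ite, mul_one, mul_zero, sum_sub_distrib, sum_ite_eq', mem_univ, if_true]

theorem lt_of_reactionVector_neg [Fintype ι] {R : Type*} [CommRing R] [LinearOrder R]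
    [IsStrictOrderedRing R] {e : ι → R} (he : ∀ i, 0 < e i)
    (hcons : ∑ i, e i * (reactionVector a b c i : R) = 0) {i : ι}
    (hi : reactionVector a b c i < 0) : e i < e c := by
  have hc : e c = e a + e b := by
    rw [sum_mul_reactionVector] at hcons
    linear_combination hcons
  have ha := he a
  have hb := he b
  rcases eq_or_eq_of_reactionVector_neg hi with rfl | rfl <;> linarith

end ReactionVector

theorem exists_row_ne_zero_nonneg_of_neg_lt {ι κ R : Type*} [Fintype ι] [LinearOrder R]
    (M : Matrix ι κ ℤ) (e : ι → R) (hne : ∃ i j, M i j ≠ 0)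
    (hneg : ∀ i j, M i j < 0 → ∃ k, M k j ≠ 0 ∧ e i < e k) :
    ∃ i, (∃ j, M i j ≠ 0) ∧ ∀ j, 0 ≤ M i j := by
  classical
  let S : Finset ι := univ.filter fun i => ∃ j, M i j ≠ 0
  have hS : S.Nonempty := by
    obtain ⟨i, j, hij⟩ := hne
    exact ⟨i, by simpa [S] using ⟨j, hij⟩⟩
  obtain ⟨i, hiS, hmax⟩ := S.exists_max_image e hS
  refine ⟨i, by simpa [S] using hiS, fun j => ?_⟩
  by_contra! hij
  obtain ⟨k, hk, hlt⟩ := hneg i j hij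
  exact (hmax k (by simpa [S] using ⟨j, hk⟩)).not_gt hlt

/-- a stoichiometric matrix (columns of type ε_{j₃} − ε_{j₁} − ε_{j₂})
with a positive conservation vector has a nonzero row with nonnegative entries. -/
theorem stmt7 (P R : ℕ) (hR : 0 < R) (M : Matrix (Fin P) (Fin R) ℤ)
    (hcol : ∀ j : Fin R, ∃ j1 j2 j3 : Fin P, j3 ≠ j1 ∧ j3 ≠ j2 ∧
      ∀ i : Fin P, M i j =
        (if i = j3 then 1 else 0) - (if i = j1 then 1 else 0) - (if i = j2 then 1 else 0))
    (e : Fin P → ℝ) (he : ∀ i, 0 < e i)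
    (hcons : ∀ j : Fin R, ∑ i, e i * (M i j : ℝ) = 0) :
    ∃ i : Fin P, (∃ j, M i j ≠ 0) ∧ ∀ j, 0 ≤ M i j := by
  have hreact : ∀ j, ∃ j1 j2 j3, j3 ≠ j1 ∧ j3 ≠ j2 ∧ (M · j) = reactionVector j1 j2 j3 :=
    fun j => (hcol j).imp fun _ => .imp fun _ => .imp fun _ h => ⟨h.1, h.2.1, funext h.2.2⟩
  apply exists_row_ne_zero_nonneg_of_neg_lt M e
  · obtain ⟨j1, j2, j3, h31, h32, hM⟩ := hreact ⟨0, hR⟩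
    refine ⟨j3, ⟨0, hR⟩, ?_⟩
    simp [congrFun hM j3, reactionVector_product h31 h32]
  · intro i j hij
    obtain ⟨j1, j2, j3, h31, h32, hM⟩ := hreact j
    have hcons' := hcons j
    simp only [congrFun hM] at hij hcons' ⊢
    exact ⟨j3, by simp [reactionVector_product h31 h32], lt_of_reactionVector_neg he hcons' hij⟩
end

section
/- Suppose M is a P×R stoichiometric matrix in the sorted block form of the permutation lemma, with the first s rows forming the submatrix N₁ with nonpositive entries. Then there exists a constant C > 0 (depending only on the rate constants k_j^f, k_j^b) such that for all c ∈ ℝ₊^P: (a) f_k(c) ≤ C Σ_{i=1}^P c_i for 1 ≤ k ≤ s, and (b) f_k(c) ≤ C (Σ_{i=1}^P c_i + Σ_{i=1}^{k−1} c_i²) for s+1 ≤ k ≤ P. -/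
/-!
Split `f_k = ∑_j M_{kj} r_j` reaction by reaction. The coefficient `M_{kj}` lies in `[-2, 1]`,
so the backward part `-M_{kj} k_j^b c_{j₃}` is at most `2 k_j^b ∑ c_i`. The forward part
`M_{kj} k_j^f c_{j₁} c_{j₂}` is nonpositive unless `k` is the product `j₃` of reaction `j`;
this never happens for `k < s`, and for `k ≥ s` the sorting puts both reactants below `k`,
so `c_{j₁} c_{j₂} ≤ (c_{j₁}² + c_{j₂}²) / 2 ≤ ∑_{i<k} c_i²`.
Hence both parts hold with `C = 1 + ∑_j (k_j^f + 2 k_j^b)`.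
-/

open Finset

section MassAction

variable {ι σ : Type*} [DecidableEq σ]

/-- Net stoichiometric coefficient of species `k` in reaction `j : j1 j + j2 j ⇌ j3 j`. -/
def stoichCoeff (j1 j2 j3 : ι → σ) (k : σ) (j : ι) : ℝ :=
  (if k = j3 j then 1 else 0) - (if k = j1 j then 1 else 0) - (if k = j2 j then 1 else 0)

def massActionRate (j1 j2 j3 : ι → σ) (kf kb : ι → ℝ) (c : σ → ℝ) (j : ι) : ℝ :=
  kf j * c (j1 j) * c (j2 j) - kb j * c (j3 j)

variable {j1 j2 j3 : ι → σ} {kf kb : ι → ℝ} {c : σ → ℝ} {k : σ} {j : ι} {Q : ℝ}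

variable (j1 j2 j3 k j) in
lemma neg_two_le_stoichCoeff : -2 ≤ stoichCoeff j1 j2 j3 k j := by
  unfold stoichCoeff; split_ifs <;> norm_num

variable (j1 j2 j3 k j) in
lemma stoichCoeff_le_one : stoichCoeff j1 j2 j3 k j ≤ 1 := by
  unfold stoichCoeff; split_ifs <;> norm_num

variable (j1 j2) in
lemma stoichCoeff_nonpos (hk : k ≠ j3 j) : stoichCoeff j1 j2 j3 k j ≤ 0 := by
  unfold stoichCoeff; rw [if_neg hk]; split_ifs <;> norm_num

lemma mul_le_of_sq_le_of_sq_le {R : Type*} [CommRing R] [LinearOrder R] [IsStrictOrderedRing R]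
    {a b Q : R} (ha : a ^ 2 ≤ Q) (hb : b ^ 2 ≤ Q) : a * b ≤ Q := by
  linarith [two_mul_le_add_sq a b]

lemma stoichCoeff_mul_massActionRate_le (hkf : 0 ≤ kf j) (hkb : 0 ≤ kb j)
    (hc : ∀ l, 0 ≤ c l) (hQ : 0 ≤ Q)
    (hreact : k = j3 j → c (j1 j) ^ 2 ≤ Q ∧ c (j2 j) ^ 2 ≤ Q) :
    stoichCoeff j1 j2 j3 k j * massActionRate j1 j2 j3 kf kb c j ≤
      kf j * Q + 2 * kb j * c (j3 j) := by
  have hA : 0 ≤ kf j * c (j1 j) * c (j2 j) := mul_nonneg (mul_nonneg hkf (hc _)) (hc _)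
  have hB : 0 ≤ kb j * c (j3 j) := mul_nonneg hkb (hc _)
  have hforward : stoichCoeff j1 j2 j3 k j * (kf j * c (j1 j) * c (j2 j)) ≤ kf j * Q := by
    by_cases hk : k = j3 j
    · obtain ⟨h1, h2⟩ := hreact hk
      calc _ ≤ kf j * c (j1 j) * c (j2 j) := mul_le_of_le_one_left hA (stoichCoeff_le_one ..)
        _ ≤ kf j * Q := by
          rw [mul_assoc]; exact mul_le_mul_of_nonneg_left (mul_le_of_sq_le_of_sq_le h1 h2) hkf
    · exact (mul_nonpos_of_nonpos_of_nonneg (stoichCoeff_nonpos j1 j2 hk) hA).trans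
        (mul_nonneg hkf hQ)
  have hbackward : -(stoichCoeff j1 j2 j3 k j * (kb j * c (j3 j))) ≤ 2 * (kb j * c (j3 j)) := by
    nlinarith [neg_two_le_stoichCoeff j1 j2 j3 k j]
  unfold massActionRate
  linarith

theorem sum_stoichCoeff_mul_massActionRate_le [Fintype ι] [Fintype σ] (hkf : ∀ j, 0 ≤ kf j)
    (hkb : ∀ j, 0 ≤ kb j) (hc : ∀ l, 0 ≤ c l) (hQ : 0 ≤ Q)
    (hreact : ∀ j, k = j3 j → c (j1 j) ^ 2 ≤ Q ∧ c (j2 j) ^ 2 ≤ Q) :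
    ∑ j, stoichCoeff j1 j2 j3 k j * massActionRate j1 j2 j3 kf kb c j ≤
      (∑ j, (kf j + 2 * kb j)) * (∑ i, c i + Q) := by
  have hsum : 0 ≤ ∑ i, c i := sum_nonneg fun i _ => hc i
  rw [sum_mul]
  refine sum_le_sum fun j _ => (stoichCoeff_mul_massActionRate_le (hkf j) (hkb j) hc hQ
    (hreact j)).trans ?_
  have : c (j3 j) ≤ ∑ i, c i := single_le_sum (fun i _ => hc i) (mem_univ _)
  nlinarith [mul_nonneg (hkf j) hsum, mul_nonneg (hkb j) hQ, mul_le_mul_of_nonneg_left this (hkb j)]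

end MassAction

/-- in the sorted block form (no product among the first s species, and
reactant indices strictly below the product index), the reaction terms satisfy the
linear bound for k ≤ s and the linear-plus-lower-quadratic bound for k > s. -/
theorem stmt10 (P R s : ℕ) (j1 j2 j3 : Fin R → Fin P)
    (kf kb : Fin R → ℝ) (hkf : ∀ j, 0 ≤ kf j) (hkb : ∀ j, 0 ≤ kb j)
    (hs : ∀ j, s ≤ (j3 j : ℕ))
    (hsort : ∀ j, (j1 j : ℕ) < (j3 j : ℕ) ∧ (j2 j : ℕ) < (j3 j : ℕ)) :
    ∃ C > (0 : ℝ), ∀ c : Fin P → ℝ, (∀ l, 0 ≤ c l) → ∀ k : Fin P,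
      ((k : ℕ) < s →
        (∑ j : Fin R,
          (((if k = j3 j then 1 else 0) - (if k = j1 j then 1 else 0)
              - (if k = j2 j then 1 else 0) : ℝ)) *
            (kf j * c (j1 j) * c (j2 j) - kb j * c (j3 j)))
          ≤ C * ∑ i, c i) ∧
      (s ≤ (k : ℕ) →
        (∑ j : Fin R,
          (((if k = j3 j then 1 else 0) - (if k = j1 j then 1 else 0)
              - (if k = j2 j then 1 else 0) : ℝ)) *
            (kf j * c (j1 j) * c (j2 j) - kb j * c (j3 j)))
          ≤ C * (∑ i, c i +
              ∑ i ∈ Finset.univ.filter (fun i : Fin P => (i : ℕ) < (k : ℕ)), c i ^ 2)) := by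
  set K := ∑ j, (kf j + 2 * kb j)
  have hK : 0 ≤ K := sum_nonneg fun j _ => by linarith [hkf j, hkb j]
  refine ⟨K + 1, by linarith, fun c hc k => ⟨fun hks => ?_, fun _ => ?_⟩⟩
  · have hne : ∀ j, k ≠ j3 j := fun j h => by have := hs j; omega
    calc _ ≤ K * (∑ i, c i + 0) :=
          sum_stoichCoeff_mul_massActionRate_le hkf hkb hc le_rfl fun j h => absurd h (hne j)
      _ ≤ (K + 1) * ∑ i, c i := by
          rw [add_zero]; exact mul_le_mul_of_nonneg_right (by linarith) (sum_nonneg fun i _ => hc i)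
  · have hreact (j) (hk : k = j3 j) (i : Fin P) (hi : (i : ℕ) < j3 j) :
        c i ^ 2 ≤ ∑ i ∈ univ.filter (fun i : Fin P => (i : ℕ) < k), c i ^ 2 :=
      single_le_sum (fun i _ => sq_nonneg (c i)) (by simpa [hk] using hi)
    calc _ ≤ K * (∑ i, c i + ∑ i ∈ univ.filter (fun i : Fin P => (i : ℕ) < k), c i ^ 2) :=
          sum_stoichCoeff_mul_massActionRate_le hkf hkb hc (sum_nonneg fun i _ => sq_nonneg (c i))
            fun j hk => ⟨hreact j hk _ (hsort j).1, hreact j hk _ (hsort j).2⟩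
      _ ≤ _ := mul_le_mul_of_nonneg_right (by linarith)
          (add_nonneg (sum_nonneg fun i _ => hc i) (sum_nonneg fun i _ => sq_nonneg _))
end
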